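/- arXiv:2206.13997 — 5 statements merged into one kernel-verified Lean document; each statement's English description precedes it below -/
import Mathlib

section
/- Let γ ∈ GL_r(K) and z = (z_1,…,z_{r−1},1)^T. For 1 ≤ j,l ≤ r−1 define 𝔠^γ_{jl}(z) := c^γ_{jl} − c^γ_{jr} z_l, where c^γ_{jl} is the (j,l)-cofactor of γ, and let 𝔈^γ(z) = (𝔠^γ_{jl}(z)) be the resulting (r−1)×(r−1) matrix. Then det(𝔈^γ(z)) = det(γ)^{r−2} · j(γ,z), where j(γ,z) = a_{r1}z_1 + ⋯ + a_{r,r−1}z_{r−1} + a_{rr} for γ = (a_{νμ}). -/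
/-!
Write `A = adj γ`, `e = e_r` and `u = z - e`, so that `e ⬝ u = 0`: then
`N = u eᵀ` squares to zero and `det (1 + N) = 1`.
The transpose of `𝔈^γ(z)` is the top-left `(r-1)×(r-1)` block of `(1 - N) A`, and
`1 - N = adj (1 + N)`. The determinant of that block is the `(r, r)` entry of
`adj ((1 - N) A) = adj (adj (γ (1 + N))) = det(γ)^{r-2} γ (1 + N)`, and since `(1 + N) e = z`
this entry is `det(γ)^{r-2} (γ z)_r = det(γ)^{r-2} j(γ, z)`.
-/

open Matrix

namespace Matrix

variable {R ι : Type*} [CommRing R] [Fintype ι]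

theorem det_submatrix_castSucc_castSucc {n : ℕ} (B : Matrix (Fin (n + 1)) (Fin (n + 1)) R) :
    (B.submatrix Fin.castSucc Fin.castSucc).det = B.adjugate (Fin.last n) (Fin.last n) := by
  rw [adjugate_fin_succ_eq_det_submatrix, Fin.succAbove_last, Fin.val_last,
    Even.neg_one_pow ⟨n, rfl⟩, one_mul]

theorem vecMulVec_mul_self_of_dotProduct_eq_zero {u v : ι → R} (huv : v ⬝ᵥ u = 0) :
    vecMulVec u v * vecMulVec u v = 0 := by
  rw [vecMulVec_mul_vecMulVec, huv, zero_smul]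
  ext
  simp [vecMulVec_apply]

variable [DecidableEq ι]

theorem adjugate_eq_of_mul_eq_one {M M' : Matrix ι ι R} (h : M * M' = 1) (hdet : M.det = 1) :
    M.adjugate = M' := by
  calc M.adjugate = M.adjugate * M * M' := by rw [Matrix.mul_assoc, h, Matrix.mul_one]
    _ = M' := by rw [adjugate_mul, hdet, one_smul, Matrix.one_mul]

theorem det_one_add_vecMulVec (u v : ι → R) : (1 + vecMulVec u v).det = 1 + v ⬝ᵥ u := by
  rw [vecMulVec_eq Unit, det_one_add_replicateCol_mul_replicateRow]

theorem adjugate_one_add_vecMulVec {u v : ι → R} (huv : v ⬝ᵥ u = 0) :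
    (1 + vecMulVec u v).adjugate = 1 - vecMulVec u v := by
  apply adjugate_eq_of_mul_eq_one
  · rw [add_mul, mul_sub, mul_sub, vecMulVec_mul_self_of_dotProduct_eq_zero huv]
    noncomm_ring
  · rw [det_one_add_vecMulVec, huv, add_zero]

end Matrix

section

variable {K ι : Type*} [CommRing K] [Fintype ι] [DecidableEq ι] (z : ι → K) (r : ι)

theorem one_sub_vecMulVec_sub_single_mul_apply (A : Matrix ι ι K) {i : ι} (hi : i ≠ r)
    (j : ι) :
    ((1 - vecMulVec (z - Pi.single r 1) (Pi.single r 1)) * A : Matrix ι ι K) i j =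
      A i j - z i * A r j := by
  simp [sub_mul, vecMulVec_mul, vecMulVec_apply, hi]

theorem mul_one_add_vecMulVec_sub_single_apply (γ : Matrix ι ι K) (i : ι) :
    (γ * (1 + vecMulVec (z - Pi.single r 1) (Pi.single r 1)) : Matrix ι ι K) i r =
      (γ *ᵥ z) i := by
  rw [Matrix.mul_add, Matrix.mul_one, mul_vecMulVec, Matrix.add_apply, vecMulVec_apply,
    Pi.single_eq_same, mul_one, mulVec_sub, Pi.sub_apply, mulVec_single_one]
  simp

end

theorem stmt9_general {K : Type*} [Field K] (n : ℕ) (hn : 1 ≤ n)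
    (γ : Matrix (Fin (n + 1)) (Fin (n + 1)) K)
    (z : Fin (n + 1) → K) (hz : z (Fin.last n) = 1) :
    Matrix.det (Matrix.of fun j l : Fin n =>
        γ.adjugate l.castSucc j.castSucc
          - γ.adjugate (Fin.last n) j.castSucc * z l.castSucc)
      = γ.det ^ (n - 1) * ∑ l, γ (Fin.last n) l * z l := by
  set e : Fin (n + 1) → K := Pi.single (Fin.last n) 1
  have hdot : e ⬝ᵥ (z - e) = 0 := by simp [e, hz]
  have hblock : (Matrix.of fun j l : Fin n =>
      γ.adjugate l.castSucc j.castSucc - γ.adjugate (Fin.last n) j.castSucc * z l.castSucc)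
        = (((1 - vecMulVec (z - e) e) * γ.adjugate).submatrix Fin.castSucc Fin.castSucc)ᵀ := by
    ext j l
    simp [e, one_sub_vecMulVec_sub_single_mul_apply _ _ _ (Fin.castSucc_lt_last l).ne, mul_comm]
  rw [hblock, det_transpose, det_submatrix_castSucc_castSucc, ← adjugate_one_add_vecMulVec hdot,
    ← adjugate_mul_distrib, adjugate_adjugate _ (by simp; omega), det_mul, det_one_add_vecMulVec,
    hdot, add_zero, mul_one, Fintype.card_fin, Matrix.smul_apply, smul_eq_mul,
    mul_one_add_vecMulVec_sub_single_apply]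
  rfl

/-- Proposition 5.5(i): for `γ ∈ GL_r(K)` and `z = (z_1, …, z_{r-1}, 1)ᵀ`, letting
`𝔠^γ_{jl}(z) = c^γ_{jl} - c^γ_{jr} z_l` (with `c^γ_{jl}` the `(j,l)`-cofactor of `γ`, i.e.
`adjugate γ l j`), the `(r-1)×(r-1)` matrix `𝔈^γ(z) = (𝔠^γ_{jl}(z))` satisfies
`det 𝔈^γ(z) = det(γ)^{r-2} ⬝ j(γ, z)` where `j(γ, z) = Σ_l γ_{r l} z_l`.
Here `r = n + 1`. -/
theorem stmt9 {K : Type*} [Field K] (n : ℕ) (hn : 1 ≤ n)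
    (γ : Matrix (Fin (n + 1)) (Fin (n + 1)) K) (hγ : IsUnit γ.det)
    (z : Fin (n + 1) → K) (hz : z (Fin.last n) = 1) :
    Matrix.det (Matrix.of fun j l : Fin n =>
        γ.adjugate l.castSucc j.castSucc
          - γ.adjugate (Fin.last n) j.castSucc * z l.castSucc)
      = γ.det ^ (n - 1) * ∑ l, γ (Fin.last n) l * z l :=
  stmt9_general n hn γ z hz
end

section
/- With notation as in the previous statement, for γ ∈ GL_r(K) with j(γ,z) ≠ 0 and j(γ^{-1}, γ·z) ≠ 0, the matrix 𝔈^{γ^{−1}}(γ·z) is the inverse of 𝔈^γ(z), where γ·z denotes the fractional linear action (γ·z)_i = (a_{i1}z_1+⋯+a_{ir}z_r)/(a_{r1}z_1+⋯+a_{rr}z_r) for 1 ≤ i ≤ r−1 and (γ·z)_r = 1. -/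
/-- The matrix `𝔈^γ(z) = (𝔠^γ_{jl}(z))_{1 ≤ j,l ≤ r-1}` with
`𝔠^γ_{jl}(z) = c^γ_{jl} - c^γ_{jr} z_l`, `c^γ_{jl}` the `(j,l)`-cofactor of `γ`. -/
def cofMat {K : Type*} [Field K] (n : ℕ)
    (γ : Matrix (Fin (n + 1)) (Fin (n + 1)) K) (z : Fin (n + 1) → K) :
    Matrix (Fin n) (Fin n) K :=
  Matrix.of fun j l =>
    γ.adjugate l.castSucc j.castSucc - γ.adjugate (Fin.last n) j.castSucc * z l.castSucc

/-!
Since `adj γ = det γ • γ⁻¹` and `adj γ⁻¹ = (det γ)⁻¹ • γ`, the scalars cancel and the claim is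
about the matrices built in the same way from `γ` and `γ⁻¹` themselves. Their product, a sum over
the first `n` indices, extends to a sum over all `n + 1` indices because `(γ·z)_r = 1`; expanding it
gives `γ⁻¹ γ = 1` plus correction terms which cancel because `γ⁻¹ (γ·z)` is proportional to `z`.
-/

section

open Matrix

variable {R : Type*} [CommRing R] {n : ℕ}

def cofMatOf (n : ℕ) (A : Matrix (Fin (n + 1)) (Fin (n + 1)) R) (w : Fin (n + 1) → R) :
    Matrix (Fin n) (Fin n) R :=
  Matrix.of fun j l => A l.castSucc j.castSucc - A (Fin.last n) j.castSucc * w l.castSucc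

lemma cofMat_eq_cofMatOf {K : Type*} [Field K] (γ : Matrix (Fin (n + 1)) (Fin (n + 1)) K)
    (z : Fin (n + 1) → K) :
    cofMat n γ z = cofMatOf n γ.adjugate z :=
  rfl

lemma cofMatOf_smul (c : R) (A : Matrix (Fin (n + 1)) (Fin (n + 1)) R) (w : Fin (n + 1) → R) :
    cofMatOf n (c • A) w = c • cofMatOf n A w := by
  ext j l
  simp only [cofMatOf, of_apply, Matrix.smul_apply, smul_eq_mul]
  ring

lemma cofMatOf_mul_cofMatOf {A B : Matrix (Fin (n + 1)) (Fin (n + 1)) R} (hBA : B * A = 1)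
    {w z : Fin (n + 1) → R} (hw : w (Fin.last n) = 1) (hz : z (Fin.last n) = 1) {c : R}
    (hBw : B *ᵥ w = c • z) :
    cofMatOf n A w * cofMatOf n B z = 1 := by
  ext j l
  set r := Fin.last n
  set f : Fin (n + 1) → R := fun k =>
    (A k j.castSucc - A r j.castSucc * w k) * (B l.castSucc k - B r k * z l.castSucc)
  have hf_last : f r = 0 := by simp only [f, hw, mul_one, sub_self, zero_mul]
  have hsum : ∑ k, f k = (B * A) l.castSucc j.castSucc - (B * A) r j.castSucc * z l.castSucc
      - A r j.castSucc * ((B *ᵥ w) l.castSucc - (B *ᵥ w) r * z l.castSucc) := by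
    simp only [f, mul_apply, mulVec, dotProduct, Finset.sum_mul, Finset.mul_sum,
      ← Finset.sum_sub_distrib]
    exact Finset.sum_congr rfl fun k _ => by ring
  calc (cofMatOf n A w * cofMatOf n B z) j l
      = ∑ k : Fin n, f k.castSucc := rfl
    _ = ∑ k, f k := by rw [Fin.sum_univ_castSucc, hf_last, add_zero]
    _ = (1 : Matrix (Fin n) (Fin n) R) j l := by
      rw [hsum, hBA, hBw, one_apply_ne (Fin.castSucc_lt_last j).ne', one_apply, one_apply]
      simp only [Pi.smul_apply, smul_eq_mul, hz, Fin.castSucc_inj, eq_comm (a := l)]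
      ring

lemma Matrix.adjugate_eq_det_smul_inv {K ι : Type*} [Field K] [Fintype ι] [DecidableEq ι]
    {γ : Matrix ι ι K} (hγ : γ.det ≠ 0) :
    γ.adjugate = γ.det • γ⁻¹ := by
  rw [inv_def, smul_smul, Ring.inverse_eq_inv', mul_inv_cancel₀ hγ, one_smul]

lemma Matrix.nonsing_inv_mulVec_eq_smul {K ι : Type*} [Field K] [Fintype ι] [DecidableEq ι]
    {γ : Matrix ι ι K} (hγ : IsUnit γ.det) {z w : ι → K} {c : K}
    (hw : ∀ i, w i = (∑ l, γ i l * z l) / c) :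
    γ⁻¹ *ᵥ w = c⁻¹ • z := by
  have hw_smul : w = c⁻¹ • (γ *ᵥ z) := funext fun i => by
    rw [hw, div_eq_inv_mul]
    rfl
  rw [hw_smul, mulVec_smul, mulVec_mulVec, nonsing_inv_mul γ hγ, one_mulVec]

end

theorem stmt10_general {K : Type*} [Field K] (n : ℕ)
    (γ : Matrix (Fin (n + 1)) (Fin (n + 1)) K) (hγ : IsUnit γ.det)
    (z : Fin (n + 1) → K) (hz : z (Fin.last n) = 1)
    (hj : ∑ l, γ (Fin.last n) l * z l ≠ 0)
    (gz : Fin (n + 1) → K)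
    (hgz : ∀ i, gz i = (∑ l, γ i l * z l) / ∑ l, γ (Fin.last n) l * z l) :
    cofMat n γ⁻¹ gz * cofMat n γ z = 1 ∧ cofMat n γ z * cofMat n γ⁻¹ gz = 1 := by
  have hgz_last : gz (Fin.last n) = 1 := by rw [hgz, div_self hj]
  have hγ' : IsUnit γ⁻¹.det := Matrix.isUnit_nonsing_inv_det γ hγ
  have key : cofMat n γ⁻¹ gz * cofMat n γ z = 1 := by
    rw [cofMat_eq_cofMatOf, cofMat_eq_cofMatOf, Matrix.adjugate_eq_det_smul_inv hγ'.ne_zero,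
      Matrix.adjugate_eq_det_smul_inv hγ.ne_zero, Matrix.nonsing_inv_nonsing_inv γ hγ,
      cofMatOf_smul, cofMatOf_smul, smul_mul_smul_comm, Matrix.det_nonsing_inv_mul_det γ hγ,
      one_smul]
    exact cofMatOf_mul_cofMatOf (Matrix.nonsing_inv_mul γ hγ) hgz_last hz
      (Matrix.nonsing_inv_mulVec_eq_smul hγ hgz)
  exact ⟨key, mul_eq_one_comm.mp key⟩

/-- Proposition 5.5(ii): for `γ ∈ GL_r(K)` with `j(γ,z) ≠ 0` and `j(γ⁻¹, γ·z) ≠ 0`,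
the matrix `𝔈^{γ⁻¹}(γ·z)` is the (two-sided) inverse of `𝔈^γ(z)`, where
`(γ·z)_i = (Σ_l γ_{il} z_l) / (Σ_l γ_{rl} z_l)` is the fractional linear action (note that
`(γ·z)_r = 1` since `z_r = 1`). -/
theorem stmt10 {K : Type*} [Field K] (n : ℕ) (hn : 1 ≤ n)
    (γ : Matrix (Fin (n + 1)) (Fin (n + 1)) K) (hγ : IsUnit γ.det)
    (z : Fin (n + 1) → K) (hz : z (Fin.last n) = 1)
    (hj : ∑ l, γ (Fin.last n) l * z l ≠ 0)
    (gz : Fin (n + 1) → K)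
    (hgz : ∀ i, gz i = (∑ l, γ i l * z l) / ∑ l, γ (Fin.last n) l * z l)
    (hj' : ∑ l, γ⁻¹ (Fin.last n) l * gz l ≠ 0) :
    cofMat n γ⁻¹ gz * cofMat n γ z = 1 ∧ cofMat n γ z * cofMat n γ⁻¹ gz = 1 :=
  stmt10_general n γ hγ z hz hj gz hgz
end

section
/- Let γ = (a_{ij}) ∈ GL_r(K) and z = (z_1,…,z_{r−1},1)^T with j(γ,z) := a_{r1}z_1+⋯+a_{rr} ≠ 0. Then for each 1 ≤ i ≤ r−1: Σ_{ℓ=1}^{r−1} 𝔠^γ_{iℓ}(z) · c^{γ^{−1}}_{ℓ r} = − j(γ,z) · det(γ)^{−1} · c^γ_{ir}, where c^M_{jl} denotes the (j,l)-cofactor of the matrix M and 𝔠^γ_{iℓ}(z) = c^γ_{iℓ} − c^γ_{ir} z_ℓ. -/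
/-- Lemma 5.6 (L:Der): for `γ ∈ GL_r(K)` and `z = (z_1, …, z_{r-1}, 1)ᵀ` with
`j(γ,z) = Σ_l γ_{rl} z_l ≠ 0`, and `𝔠^γ_{il}(z) = c^γ_{il} - c^γ_{ir} z_l` (cofactors
`c^M_{jl} = adjugate M l j`), one has for each `1 ≤ i ≤ r-1`:
`Σ_{l=1}^{r-1} 𝔠^γ_{il}(z) ⬝ c^{γ⁻¹}_{lr} = - j(γ,z) ⬝ det(γ)⁻¹ ⬝ c^γ_{ir}`. -/
theorem stmt11 {K : Type*} [Field K] (n : ℕ) (hn : 1 ≤ n)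
    (γ : Matrix (Fin (n + 1)) (Fin (n + 1)) K) (hγ : IsUnit γ.det)
    (z : Fin (n + 1) → K) (hz : z (Fin.last n) = 1)
    (hj : ∑ l, γ (Fin.last n) l * z l ≠ 0)
    (i : Fin n) :
    ∑ l : Fin n,
        (γ.adjugate l.castSucc i.castSucc
            - γ.adjugate (Fin.last n) i.castSucc * z l.castSucc)
          * (γ⁻¹).adjugate (Fin.last n) l.castSucc
      = -((∑ l, γ (Fin.last n) l * z l) * γ.det⁻¹
          * γ.adjugate (Fin.last n) i.castSucc) := by
  -- adjugate of the inverse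
  have hadj : (γ⁻¹).adjugate = γ.det⁻¹ • γ := by
    calc (γ⁻¹).adjugate = γ * (γ⁻¹ * (γ⁻¹).adjugate) := by
          rw [← Matrix.mul_assoc, Matrix.mul_nonsing_inv γ hγ, Matrix.one_mul]
      _ = γ * ((γ⁻¹).det • 1) := by rw [Matrix.mul_adjugate]
      _ = γ.det⁻¹ • γ := by
          rw [Matrix.det_nonsing_inv, Ring.inverse_eq_inv', Matrix.mul_smul,
            Matrix.mul_one]
  have hadj' : ∀ l : Fin n, (γ⁻¹).adjugate (Fin.last n) l.castSucc
      = γ.det⁻¹ * γ (Fin.last n) l.castSucc := by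
    intro l; rw [hadj]; simp [Matrix.smul_apply]
  -- row identity: (γ * adjugate γ) (last) (i.castSucc) = 0
  have h1 : ∑ l : Fin (n + 1), γ (Fin.last n) l * γ.adjugate l i.castSucc = 0 := by
    have h := congrFun (congrFun (Matrix.mul_adjugate γ) (Fin.last n)) i.castSucc
    rw [Matrix.mul_apply] at h
    rw [h]
    simp [Matrix.one_apply, (Fin.castSucc_lt_last i).ne']
  have h1' : ∑ l : Fin n, γ (Fin.last n) l.castSucc * γ.adjugate l.castSucc i.castSucc
      = - (γ (Fin.last n) (Fin.last n) * γ.adjugate (Fin.last n) i.castSucc) := by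
    have := Fin.sum_univ_castSucc
      (f := fun l => γ (Fin.last n) l * γ.adjugate l i.castSucc)
    rw [h1] at this
    linear_combination -this
  have hjsplit : ∑ l, γ (Fin.last n) l * z l
      = (∑ l : Fin n, γ (Fin.last n) l.castSucc * z l.castSucc)
        + γ (Fin.last n) (Fin.last n) := by
    rw [Fin.sum_univ_castSucc (f := fun l => γ (Fin.last n) l * z l), hz, mul_one]
  calc ∑ l : Fin n,
        (γ.adjugate l.castSucc i.castSucc
            - γ.adjugate (Fin.last n) i.castSucc * z l.castSucc)
          * (γ⁻¹).adjugate (Fin.last n) l.castSucc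
      = ∑ l : Fin n, (γ.det⁻¹ * (γ (Fin.last n) l.castSucc * γ.adjugate l.castSucc i.castSucc)
          - γ.det⁻¹ * γ.adjugate (Fin.last n) i.castSucc
              * (γ (Fin.last n) l.castSucc * z l.castSucc)) := by
        refine Finset.sum_congr rfl fun l _ => ?_
        rw [hadj' l]; ring
    _ = γ.det⁻¹ * (∑ l : Fin n, γ (Fin.last n) l.castSucc * γ.adjugate l.castSucc i.castSucc)
          - γ.det⁻¹ * γ.adjugate (Fin.last n) i.castSucc
            * (∑ l : Fin n, γ (Fin.last n) l.castSucc * z l.castSucc) := by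
        rw [Finset.sum_sub_distrib, Finset.mul_sum, Finset.mul_sum]
    _ = -((∑ l, γ (Fin.last n) l * z l) * γ.det⁻¹
          * γ.adjugate (Fin.last n) i.castSucc) := by
        rw [h1', hjsplit]; ring
end

section
/- Let F̄ ⊂ C be fields with F̄ algebraically closed in C, let S = {x_0, …, x_{r−1}} ⊂ C be algebraically independent over F̄, and let Q ∈ C. Suppose there exist homogeneous polynomials D, B ∈ F̄[X_0,…,X_{r−1}] with D(x_0,…,x_{r−1}) ≠ 0, of total degrees d and e respectively with d ≠ e, such that D(x_0,…,x_{r−1}) · Q^{m} = c · B(x_0,…,x_{r−1}) for some positive integer m, c ∈ F̄^×, and Q ≠ 0. If additionally B(x_0,…,x_{r−1}) ≠ 0, then Q is transcendental over F̄. -/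
/-- Abstract homogeneous degree-mismatch transcendence criterion (underlying Prop. 6.6):
let `F̄ ⊂ C` be fields with `F̄` algebraically closed in `C`, `x : Fin r → C` algebraically
independent over `F̄`, and `Q ∈ C`, `Q ≠ 0`.  If `D, B` are homogeneous polynomials over `F̄`
of distinct total degrees `d ≠ e` with `D(x) ≠ 0`, `B(x) ≠ 0`, and
`D(x) ⬝ Q^m = c ⬝ B(x)` for some `m ≥ 1` and `c ∈ F̄^×`, then `Q` is transcendental over `F̄`. -/
theorem stmt15 {K C : Type*} [Field K] [Field C] [Algebra K C]
    (halgcl : ∀ y : C, IsAlgebraic K y → ∃ a : K, algebraMap K C a = y)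
    (r : ℕ) (x : Fin r → C) (hx : AlgebraicIndependent K x)
    (Q : C) (hQ : Q ≠ 0)
    (D B : MvPolynomial (Fin r) K) (d e : ℕ) (hde : d ≠ e)
    (hD : D.IsHomogeneous d) (hB : B.IsHomogeneous e)
    (hDx : MvPolynomial.aeval x D ≠ 0) (hBx : MvPolynomial.aeval x B ≠ 0)
    (m : ℕ) (hm : 0 < m) (c : K) (hc : c ≠ 0)
    (heq : MvPolynomial.aeval x D * Q ^ m
        = algebraMap K C c * MvPolynomial.aeval x B) :
    Transcendental K Q := by
  intro halg
  obtain ⟨q, hq⟩ := halgcl Q halg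
  have hq0 : q ≠ 0 := by
    rintro rfl
    simp at hq
    exact hQ hq.symm
  have key : MvPolynomial.aeval x (MvPolynomial.C (q ^ m) * D)
      = MvPolynomial.aeval x (MvPolynomial.C c * B) := by
    simp only [map_mul, MvPolynomial.aeval_C, map_pow]
    rw [hq]
    ring_nf
    ring_nf at heq
    linear_combination heq
  have hpoly : MvPolynomial.C (q ^ m) * D = MvPolynomial.C c * B := hx key
  have hD0 : D ≠ 0 := by
    rintro rfl
    simp at hDx
  have h1 : (MvPolynomial.C (q ^ m) * D).IsHomogeneous d := by
    simpa using (MvPolynomial.isHomogeneous_C _ (q ^ m)).mul hD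
  have h2 : (MvPolynomial.C (q ^ m) * D).IsHomogeneous e := by
    rw [hpoly]
    simpa using (MvPolynomial.isHomogeneous_C _ c).mul hB
  have hne : MvPolynomial.C (q ^ m) * D ≠ 0 := by
    simp [MvPolynomial.C_eq_zero, hD0, pow_eq_zero_iff, hq0, hm.ne']
  exact hde (h1.inj_right h2 hne)
end

section
/- Let φ be a CM Drinfeld F_q[θ]-module of rank r defined over K̄ whose leading coefficient is 1, with period lattice A^r wz' for w ∈ C_∞^×, z' ∈ Ω^r, and suppose the (i,j)-cofactor L_{ij}(wz') of its period matrix is nonzero for some 1 ≤ i ≤ r−1, 1 ≤ j ≤ r. Then, given that the set S' = { w/π̃, F_τ(w)/π̃, …, F_{τ^{r−1}}(w)/π̃ } is algebraically independent over K̄ and that det(P_{wz'}) = − π̃/((−1)^{r−1})^{1/(q−1)}, the quantity 𝔔 := (w/π̃)^ℓ · (L_{ij}(wz')/π̃) is transcendental over K̄ for every integer ℓ ≥ 0, where each entry of the period matrix P_{wz'} is a homogeneous degree-1 K̄-polynomial in w, F_τ(w), …, F_{τ^{r−1}}(w). -/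
/-!
Put `y = x / π`, algebraically independent over `K`. Homogeneity gives `det P = π ^ r D(y)` and
`L_{ij} = π ^ (r - 1) A(y)` for `D = det Pm` and `A = adj(Pm) j i`, homogeneous of degrees `r`
and `r - 1`, and `ρ ∈ K` since it is algebraic. If `𝔔 = y_{i₀} ^ ℓ π ^ (r - 2) A(y)` were
algebraic, hence in `K`, then, as `π ^ (r - 1) D(y) = -1/ρ ∈ K`, eliminating `π` would put
`y_{i₀} ^ (ℓ (r - 1)) A(y) ^ (r - 1)` in `K ⬝ D(y) ^ (r - 2)`. By independence this is an identity
of polynomials, impossible since the degrees `(ℓ + r - 1)(r - 1)` and `r (r - 2)` differ.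
-/

open MvPolynomial

namespace MvPolynomial

theorem IsHomogeneous.aeval_smul {R A σ : Type*} [CommSemiring R] [CommSemiring A] [Algebra R A]
    {p : MvPolynomial σ R} {n : ℕ} (hp : p.IsHomogeneous n) (c : A) (y : σ → A) :
    MvPolynomial.aeval (c • y) p = c ^ n * MvPolynomial.aeval y p := by
  classical
  rw [aeval_def, aeval_def, eval₂_eq, eval₂_eq, Finset.mul_sum]
  refine Finset.sum_congr rfl fun d hd => ?_
  have hdeg : ∑ k ∈ d.support, d k = n := by
    rw [← Finsupp.degree_apply, Finsupp.degree_eq_weight_one]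
    exact hp (mem_support_iff.mp hd)
  simp only [Pi.smul_apply, smul_eq_mul, mul_pow, Finset.prod_mul_distrib,
    Finset.prod_pow_eq_pow_sum, hdeg]
  ring

end MvPolynomial

namespace Matrix

variable {n R σ : Type*} [Fintype n] [DecidableEq n] [CommRing R]

theorem isHomogeneous_det (M : Matrix n n (MvPolynomial σ R)) (d : n → ℕ)
    (hM : ∀ a b, (M a b).IsHomogeneous (d a)) :
    M.det.IsHomogeneous (∑ a, d a) := by
  rw [det_apply]
  refine IsHomogeneous.sum _ _ _ fun τ _ => ?_
  have hprod : (∏ a, M (τ a) a).IsHomogeneous (∑ a, d a) := by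
    rw [← Equiv.sum_comp τ d]
    exact IsHomogeneous.prod _ _ _ fun a _ => hM (τ a) a
  rcases Int.units_eq_one_or (Equiv.Perm.sign τ) with hs | hs <;> rw [hs]
  · simpa using hprod
  · simpa using hprod.neg

theorem isHomogeneous_det_of_isHomogeneous_one {M : Matrix n n (MvPolynomial σ R)}
    (hM : ∀ a b, (M a b).IsHomogeneous 1) : M.det.IsHomogeneous (Fintype.card n) := by
  simpa using isHomogeneous_det M (fun _ => 1) hM

theorem isHomogeneous_adjugate_apply {M : Matrix n n (MvPolynomial σ R)}
    (hM : ∀ a b, (M a b).IsHomogeneous 1) (i j : n) :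
    (M.adjugate i j).IsHomogeneous (Fintype.card n - 1) := by
  have hrows : ∀ a b, (M.updateRow j (Pi.single i 1) a b).IsHomogeneous (if a = j then 0 else 1) := by
    intro a b
    rcases eq_or_ne a j with rfl | haj
    · rw [updateRow_self, if_pos rfl, Pi.single_apply]
      split
      · exact isHomogeneous_one _ _
      · exact isHomogeneous_zero _ _ _
    · rw [updateRow_ne haj, if_neg haj]
      exact hM a b
  have hsum : (∑ a : n, if a = j then 0 else 1) = Fintype.card n - 1 := by
    simp [Finset.sum_ite, Finset.filter_ne', Finset.card_erase_of_mem]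
  rw [adjugate_apply, ← hsum]
  exact isHomogeneous_det _ _ hrows

end Matrix

theorem AlgebraicIndependent.degree_eq_of_aeval_eq_smul {K A σ : Type*} [CommRing K] [CommRing A]
    [Algebra K A] {y : σ → A} (hy : AlgebraicIndependent K y) {f g : MvPolynomial σ K}
    {m n : ℕ} (hf : f.IsHomogeneous m) (hg : g.IsHomogeneous n) (hf0 : f ≠ 0) (c : K)
    (h : aeval y f = c • aeval y g) : m = n := by
  have hfg : f = C c * g := by
    rw [← sub_eq_zero]
    refine hy.eq_zero_of_aeval_eq_zero _ ?_
    rw [map_sub, map_mul, aeval_C, h, Algebra.smul_def, sub_self]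
  exact hf.inj_right (hfg ▸ hg.C_mul c) hf0

theorem transcendental_pow_mul_pow_mul_aeval {K C σ : Type*} [Field K] [Field C] [Algebra K C]
    (halgcl : ∀ z : C, IsAlgebraic K z → ∃ a : K, algebraMap K C a = z)
    {y : σ → C} (hy : AlgebraicIndependent K y) {D A : MvPolynomial σ K} {s : ℕ}
    (hD : D.IsHomogeneous (s + 2)) (hA : A.IsHomogeneous (s + 1)) (hA0 : A ≠ 0)
    {π : C} {κ : K} (hκ : κ ≠ 0) (hπ : π ^ (s + 1) * aeval y D = algebraMap K C κ)
    (i₀ : σ) (ℓ : ℕ) :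
    Transcendental K (y i₀ ^ ℓ * π ^ s * aeval y A) := by
  intro halg
  obtain ⟨a, ha⟩ := halgcl _ halg
  have hπD : π ^ (s + 1) * aeval y D ≠ 0 := by simpa [hπ] using hκ
  have hπ0 : π ≠ 0 := fun h => hπD (by simp [h])
  have hD0 : aeval y D ≠ 0 := right_ne_zero_of_mul hπD
  have key : aeval y (X i₀ ^ (ℓ * (s + 1)) * A ^ (s + 1))
      = (a ^ (s + 1) / κ ^ s) • aeval y (D ^ s) := by
    simp only [map_mul, map_pow, aeval_X, Algebra.smul_def, map_div₀, ha, ← hπ]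
    field_simp
    ring
  have hdeg := hy.degree_eq_of_aeval_eq_smul ((isHomogeneous_X_pow i₀ _).mul (hA.pow _))
    (hD.pow s) (mul_ne_zero (pow_ne_zero _ (X_ne_zero _)) (pow_ne_zero _ hA0)) _ key
  nlinarith

theorem stmt18_general {K C : Type*} [Field K] [Field C] [Algebra K C]
    (halgcl : ∀ y : C, IsAlgebraic K y → ∃ a : K, algebraMap K C a = y)
    (q r : ℕ) (hq : 2 ≤ q) (hr : 2 ≤ r)
    (x : Fin r → C) (π : C) (hπ : π ≠ 0)
    (hind : AlgebraicIndependent K (fun k => x k / π))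
    (Pm : Matrix (Fin r) (Fin r) (MvPolynomial (Fin r) K))
    (hhom : ∀ i j, (Pm i j).IsHomogeneous 1)
    (P : Matrix (Fin r) (Fin r) C)
    (hP : ∀ i j, P i j = MvPolynomial.aeval x (Pm i j))
    (ρ : C) (hρ0 : ρ ≠ 0) (hρ : ρ ^ (q - 1) = (-1 : C) ^ (r - 1))
    (hdet : P.det = -π / ρ)
    (i j : Fin r)
    (hL : P.adjugate j i ≠ 0)
    (i₀ : Fin r) (w : C) (hw : w = x i₀) (ℓ : ℕ) :
    Transcendental K ((w / π) ^ ℓ * (P.adjugate j i / π)) := by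
  obtain ⟨s, rfl⟩ : ∃ s, r = s + 2 := ⟨r - 2, by omega⟩
  set y : Fin (s + 2) → C := fun k => x k / π with hy
  have hx : x = π • y := funext fun k => (mul_div_cancel₀ (x k) hπ).symm
  have hPx : P = (aeval x).mapMatrix Pm := Matrix.ext hP
  have hdetHom : Pm.det.IsHomogeneous (s + 2) := by
    simpa using Matrix.isHomogeneous_det_of_isHomogeneous_one hhom
  have hadjHom : (Pm.adjugate j i).IsHomogeneous (s + 1) := by
    simpa using Matrix.isHomogeneous_adjugate_apply hhom j i
  have hdetP : P.det = π ^ (s + 2) * aeval y Pm.det := by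
    rw [hPx, ← AlgHom.map_det, hx, hdetHom.aeval_smul]
  have hadjP : P.adjugate j i = π ^ (s + 1) * aeval y (Pm.adjugate j i) := by
    rw [hPx, ← AlgHom.map_adjugate, AlgHom.mapMatrix_apply, Matrix.map_apply, hx,
      hadjHom.aeval_smul]
  obtain ⟨c, rfl⟩ := halgcl ρ <| IsAlgebraic.of_pow (by omega : 0 < q - 1)
    (hρ ▸ isAlgebraic_one.neg.pow _)
  have hc0 : c ≠ 0 := by rintro rfl; simp at hρ0
  have hκ : π ^ (s + 1) * aeval y Pm.det = algebraMap K C (-c⁻¹) := by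
    rw [hdetP] at hdet
    rw [map_neg, map_inv₀]
    field_simp at hdet ⊢
    exact mul_left_cancel₀ hπ (by linear_combination hdet)
  have hA0 : Pm.adjugate j i ≠ 0 := fun h0 => hL (by simp [hadjP, h0])
  convert transcendental_pow_mul_pow_mul_aeval halgcl hind hdetHom hadjHom hA0 (by simpa) hκ i₀ ℓ
    using 1
  rw [hw, hadjP, hy]
  field_simp
  ring

/-- Proposition 6.6 (P:T1): let `φ` be a CM Drinfeld `F_q[θ]`-module of rank `r` over `K̄`
with leading coefficient `1` and period lattice `A^r w z'`.  Each entry of its period matrix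
`P = P_{wz'}` is a homogeneous degree-`1` `K̄`-polynomial evaluated at the vector
`x = (w, F_τ(w), …, F_{τ^{r-1}}(w))`; the set `{w/π̃, F_τ(w)/π̃, …, F_{τ^{r-1}}(w)/π̃}` is
algebraically independent over `K̄`, and `det P = -π̃/ρ` with `ρ^{q-1} = (-1)^{r-1}`.
If the `(i,j)`-cofactor `L_{ij}(wz') = adjugate P j i` is nonzero (`1 ≤ i ≤ r-1`), then
`𝔔 = (w/π̃)^ℓ ⬝ (L_{ij}(wz')/π̃)` is transcendental over `K̄` for every integer `ℓ ≥ 0`. -/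
theorem stmt18 {K C : Type*} [Field K] [Field C] [Algebra K C]
    (halgcl : ∀ y : C, IsAlgebraic K y → ∃ a : K, algebraMap K C a = y)
    (q r : ℕ) (hq : 2 ≤ q) (hr : 2 ≤ r)
    (x : Fin r → C) (π : C) (hπ : π ≠ 0)
    (hind : AlgebraicIndependent K (fun k => x k / π))
    (Pm : Matrix (Fin r) (Fin r) (MvPolynomial (Fin r) K))
    (hhom : ∀ i j, (Pm i j).IsHomogeneous 1)
    (P : Matrix (Fin r) (Fin r) C)
    (hP : ∀ i j, P i j = MvPolynomial.aeval x (Pm i j))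
    (ρ : C) (hρ0 : ρ ≠ 0) (hρ : ρ ^ (q - 1) = (-1 : C) ^ (r - 1))
    (hdet : P.det = -π / ρ)
    (i j : Fin r) (hi : (i : ℕ) < r - 1)
    (hL : P.adjugate j i ≠ 0)
    (i₀ : Fin r) (w : C) (hw : w = x i₀) (ℓ : ℕ) :
    Transcendental K ((w / π) ^ ℓ * (P.adjugate j i / π)) :=
  stmt18_general halgcl q r hq hr x π hπ hind Pm hhom P hP ρ hρ0 hρ hdet i j hL i₀ w hw ℓ
end
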